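/- In genus 3, for the vector fields L₀, L₂, L₄, L₆, L₈, L₁₀ on ℂ⁶ with coordinates (λ₄,…,λ₁₄) whose matrix of coefficients is the 6×6 matrix T of equation (T3), one has the identity [L₂, L₄] = (2/7)(8λ₆ L₀ - 8λ₄ L₂ + 7 L₆) as derivations of ℂ[λ₄, λ₆, λ₈, λ₁₀, λ₁₂, λ₁₄]. -/
import Mathlib


open MvPolynomial

noncomputable abbrev l4 : MvPolynomial (Fin 6) ℂ := X 0
noncomputable abbrev l6 : MvPolynomial (Fin 6) ℂ := X 1
noncomputable abbrev l8 : MvPolynomial (Fin 6) ℂ := X 2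
noncomputable abbrev l10 : MvPolynomial (Fin 6) ℂ := X 3
noncomputable abbrev l12 : MvPolynomial (Fin 6) ℂ := X 4
noncomputable abbrev l14 : MvPolynomial (Fin 6) ℂ := X 5

/-- The genus 3 symmetric 6×6 matrix `T` of equation (T3):
`T_{2k,2m} = 2(k+m)λ_{2k+2m} + Σ_{s=2}^{k-1} 2(k+m-2s)λ_{2s}λ_{2k+2m-2s} - (2k(7-m)/7)λ_{2k}λ_{2m}`
for `k ≤ m`, with `λₛ = 0` for `s ∉ {4,6,8,10,12,14}`. -/
noncomputable def T : Matrix (Fin 6) (Fin 6) (MvPolynomial (Fin 6) ℂ) :=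
  Matrix.of
    ![![4 * l4, 6 * l6, 8 * l8, 10 * l10, 12 * l12, 14 * l14],
      ![6 * l6, 8 * l8 - (20 / 7 : ℂ) • (l4 * l4), 10 * l10 - (16 / 7 : ℂ) • (l4 * l6),
        12 * l12 - (12 / 7 : ℂ) • (l4 * l8), 14 * l14 - (8 / 7 : ℂ) • (l4 * l10),
        -(4 / 7 : ℂ) • (l4 * l12)],
      ![8 * l8, 10 * l10 - (16 / 7 : ℂ) • (l4 * l6),
        12 * l12 + 4 * l4 * l8 - (24 / 7 : ℂ) • (l6 * l6),
        14 * l14 + 6 * l4 * l10 - (18 / 7 : ℂ) • (l6 * l8),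
        8 * l4 * l12 - (12 / 7 : ℂ) • (l6 * l10),
        10 * l4 * l14 - (6 / 7 : ℂ) • (l6 * l12)],
      ![10 * l10, 12 * l12 - (12 / 7 : ℂ) • (l4 * l8),
        14 * l14 + 6 * l4 * l10 - (18 / 7 : ℂ) • (l6 * l8),
        4 * l6 * l10 + 8 * l4 * l12 - (24 / 7 : ℂ) • (l8 * l8),
        6 * l6 * l12 + 10 * l4 * l14 - (16 / 7 : ℂ) • (l8 * l10),
        8 * l6 * l14 - (8 / 7 : ℂ) • (l8 * l12)],
      ![12 * l12, 14 * l14 - (8 / 7 : ℂ) • (l4 * l10),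
        8 * l4 * l12 - (12 / 7 : ℂ) • (l6 * l10),
        6 * l6 * l12 + 10 * l4 * l14 - (16 / 7 : ℂ) • (l8 * l10),
        4 * l8 * l12 + 8 * l6 * l14 - (20 / 7 : ℂ) • (l10 * l10),
        6 * l8 * l14 - (10 / 7 : ℂ) • (l10 * l12)],
      ![14 * l14, -(4 / 7 : ℂ) • (l4 * l12),
        10 * l4 * l14 - (6 / 7 : ℂ) • (l6 * l12),
        8 * l6 * l14 - (8 / 7 : ℂ) • (l8 * l12),
        6 * l8 * l14 - (10 / 7 : ℂ) • (l10 * l12),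
        4 * l10 * l14 - (12 / 7 : ℂ) • (l12 * l12)]]

/-- The derivation `L_{2k}` of `ℂ[λ₄,…,λ₁₄]`, sending `λ_{2s}` to `T_{2k+2,2s-2}`. -/
noncomputable def L (k : Fin 6) : Derivation ℂ (MvPolynomial (Fin 6) ℂ) (MvPolynomial (Fin 6) ℂ) :=
  mkDerivation ℂ (fun s => T k s)


lemma D_ofNat (D : Derivation ℂ (MvPolynomial (Fin 6) ℂ) (MvPolynomial (Fin 6) ℂ))
    (n : ℕ) [n.AtLeastTwo] : D (OfNat.ofNat n) = 0 := by
  exact D.map_natCast _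

lemma L0_0 : L 0 (X 0 : MvPolynomial (Fin 6) ℂ) = 4 * l4 := by unfold L; rw [mkDerivation_X]; rfl
lemma L0_1 : L 0 (X 1 : MvPolynomial (Fin 6) ℂ) = 6 * l6 := by unfold L; rw [mkDerivation_X]; rfl
lemma L0_2 : L 0 (X 2 : MvPolynomial (Fin 6) ℂ) = 8 * l8 := by unfold L; rw [mkDerivation_X]; rfl
lemma L0_3 : L 0 (X 3 : MvPolynomial (Fin 6) ℂ) = 10 * l10 := by unfold L; rw [mkDerivation_X]; rfl
lemma L0_4 : L 0 (X 4 : MvPolynomial (Fin 6) ℂ) = 12 * l12 := by unfold L; rw [mkDerivation_X]; rfl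
lemma L0_5 : L 0 (X 5 : MvPolynomial (Fin 6) ℂ) = 14 * l14 := by unfold L; rw [mkDerivation_X]; rfl
lemma L1_0 : L 1 (X 0 : MvPolynomial (Fin 6) ℂ) = 6 * l6 := by unfold L; rw [mkDerivation_X]; rfl
lemma L1_1 : L 1 (X 1 : MvPolynomial (Fin 6) ℂ) = 8 * l8 - (20 / 7 : ℂ) • (l4 * l4) := by unfold L; rw [mkDerivation_X]; rfl
lemma L1_2 : L 1 (X 2 : MvPolynomial (Fin 6) ℂ) = 10 * l10 - (16 / 7 : ℂ) • (l4 * l6) := by unfold L; rw [mkDerivation_X]; rfl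
lemma L1_3 : L 1 (X 3 : MvPolynomial (Fin 6) ℂ) = 12 * l12 - (12 / 7 : ℂ) • (l4 * l8) := by unfold L; rw [mkDerivation_X]; rfl
lemma L1_4 : L 1 (X 4 : MvPolynomial (Fin 6) ℂ) = 14 * l14 - (8 / 7 : ℂ) • (l4 * l10) := by unfold L; rw [mkDerivation_X]; rfl
lemma L1_5 : L 1 (X 5 : MvPolynomial (Fin 6) ℂ) = -(4 / 7 : ℂ) • (l4 * l12) := by unfold L; rw [mkDerivation_X]; rfl
lemma L2_0 : L 2 (X 0 : MvPolynomial (Fin 6) ℂ) = 8 * l8 := by unfold L; rw [mkDerivation_X]; rfl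
lemma L2_1 : L 2 (X 1 : MvPolynomial (Fin 6) ℂ) = 10 * l10 - (16 / 7 : ℂ) • (l4 * l6) := by unfold L; rw [mkDerivation_X]; rfl
lemma L2_2 : L 2 (X 2 : MvPolynomial (Fin 6) ℂ) = 12 * l12 + 4 * l4 * l8 - (24 / 7 : ℂ) • (l6 * l6) := by unfold L; rw [mkDerivation_X]; rfl
lemma L2_3 : L 2 (X 3 : MvPolynomial (Fin 6) ℂ) = 14 * l14 + 6 * l4 * l10 - (18 / 7 : ℂ) • (l6 * l8) := by unfold L; rw [mkDerivation_X]; rfl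
lemma L2_4 : L 2 (X 4 : MvPolynomial (Fin 6) ℂ) = 8 * l4 * l12 - (12 / 7 : ℂ) • (l6 * l10) := by unfold L; rw [mkDerivation_X]; rfl
lemma L2_5 : L 2 (X 5 : MvPolynomial (Fin 6) ℂ) = 10 * l4 * l14 - (6 / 7 : ℂ) • (l6 * l12) := by unfold L; rw [mkDerivation_X]; rfl
lemma L3_0 : L 3 (X 0 : MvPolynomial (Fin 6) ℂ) = 10 * l10 := by unfold L; rw [mkDerivation_X]; rfl
lemma L3_1 : L 3 (X 1 : MvPolynomial (Fin 6) ℂ) = 12 * l12 - (12 / 7 : ℂ) • (l4 * l8) := by unfold L; rw [mkDerivation_X]; rfl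
lemma L3_2 : L 3 (X 2 : MvPolynomial (Fin 6) ℂ) = 14 * l14 + 6 * l4 * l10 - (18 / 7 : ℂ) • (l6 * l8) := by unfold L; rw [mkDerivation_X]; rfl
lemma L3_3 : L 3 (X 3 : MvPolynomial (Fin 6) ℂ) = 4 * l6 * l10 + 8 * l4 * l12 - (24 / 7 : ℂ) • (l8 * l8) := by unfold L; rw [mkDerivation_X]; rfl
lemma L3_4 : L 3 (X 4 : MvPolynomial (Fin 6) ℂ) = 6 * l6 * l12 + 10 * l4 * l14 - (16 / 7 : ℂ) • (l8 * l10) := by unfold L; rw [mkDerivation_X]; rfl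
lemma L3_5 : L 3 (X 5 : MvPolynomial (Fin 6) ℂ) = 8 * l6 * l14 - (8 / 7 : ℂ) • (l8 * l12) := by unfold L; rw [mkDerivation_X]; rfl

/-- `[L₂, L₄] = (2/7)(8λ₆ L₀ - 8λ₄ L₂ + 7 L₆)`. -/
theorem commutator_L2_L4_genus3 :
    ⁅L 1, L 2⁆ = (2 / 7 : ℂ) • ((8 * l6) • L 0 - (8 * l4) • L 1 + (7 : ℂ) • L 3) := by
  refine MvPolynomial.derivation_ext fun i => ?_
  fin_cases i <;>
  · simp only [Fin.zero_eta, Fin.mk_one, Fin.reduceFinMk, Derivation.commutator_apply, Derivation.add_apply, Derivation.sub_apply,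
      Derivation.smul_apply, L0_0, L0_1, L0_2, L0_3, L0_4, L0_5, L1_0, L1_1, L1_2, L1_3, L1_4, L1_5, L2_0, L2_1, L2_2, L2_3, L2_4, L2_5, L3_0, L3_1, L3_2, L3_3, L3_4, L3_5, map_add, map_sub, map_neg, Derivation.leibniz,
      Derivation.map_smul, ← Nat.cast_ofNat (R := MvPolynomial (Fin 6) ℂ), Derivation.map_natCast, smul_eq_mul, smul_zero, zero_smul, mul_zero, zero_mul,
      add_zero, zero_add, neg_neg, neg_zero, sub_zero]
    apply MvPolynomial.funext
    intro x
    simp only [map_add, map_sub, map_mul, map_neg, smul_eval, eval_X, map_ofNat, nsmul_eq_mul,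
      Nat.cast_ofNat, smul_eq_mul]
    ring
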